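/- Let B be a left brace with B³ = 0 and let b₁,…,b_m, b_k ∈ B, with integers n₁,…,n_m, z. Writing b_{st} = b_s ∗ b_t and b_{stu} = (b_s ∗ b_t) ∗ b_u, it holds that (Σᵢ nᵢ·bᵢ) ∗ (z·b_k) = Σᵢ (nᵢz·b_{ik} − (nᵢ(nᵢ−1)z/2)·b_{iik}) − Σ_{i<j} nᵢnⱼz·b_{ijk}, where sums and scalar multiples are in the additive group. -/

import Mathlib

/-- A left brace: an abelian group `(B,+)` and a group `(B,·)` on the same set,
with common identity (`0 = 1`), satisfying `a·(b+c) = a·b − a + a·c`. -/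
class LeftBrace (B : Type*) extends AddCommGroup B, Group B where
  zero_eq_one : (0 : B) = 1
  brace_distrib : ∀ a b c : B, a * (b + c) = a * b - a + a * c

/-- The star operation `a ∗ b = a·b − a − b`. -/
def bstar {B : Type*} [LeftBrace B] (a b : B) : B := a * b - a - b

/-! When `B³ = 0`, the map `x ↦ x ∗ c` turns products into sums, and `x ∗ y` is fixed by every
`λ_a`, so that `x + y = x · (y − x ∗ y)`. Hence `(x + y) ∗ c = x ∗ c + y ∗ c − (x ∗ y) ∗ c`, where the
defect `(x, y) ↦ (x ∗ y) ∗ c` is biadditive. A map between abelian groups whose failure to be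
additive is a biadditive map expands on `∑ nᵢ xᵢ` like a quadratic polynomial, which gives the
formula. -/

namespace BiadditiveDefect

variable {A M : Type*} [AddCommGroup A] [AddCommGroup M] {f : A → M} {g : A →+ A →+ M}

theorem map_zero (hf : ∀ x y, f (x + y) = f x + f y - g x y) : f 0 = 0 := by
  simpa using hf 0 0

theorem map_neg (hf : ∀ x y, f (x + y) = f x + f y - g x y) (x : A) :
    f (-x) = -f x - g x x := by
  have h := hf x (-x)
  rw [add_neg_cancel, map_zero hf, _root_.map_neg, sub_neg_eq_add, add_assoc, eq_comm,
    add_eq_zero_iff_eq_neg'] at h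
  exact eq_sub_of_add_eq h

theorem map_zsmul (hf : ∀ x y, f (x + y) = f x + f y - g x y) (n : ℤ) (x : A) :
    f (n • x) = n • f x - (n * (n - 1) / 2) • g x x := by
  induction n using Int.induction_on with
  | zero => simp [map_zero hf]
  | succ k ih =>
    have hk : ((k : ℤ) + 1) * ((k : ℤ) + 1 - 1) / 2 = k * (k - 1) / 2 + k := by
      rw [← Int.add_mul_ediv_right _ _ two_ne_zero]; ring_nf
    rw [add_smul, one_smul, hf, ih, hk]
    simp only [_root_.map_zsmul, AddMonoidHom.zsmul_apply, add_smul, one_smul]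
    abel
  | pred k ih =>
    have hk : (-(k : ℤ) - 1) * (-(k : ℤ) - 1 - 1) / 2 = -k * (-k - 1) / 2 + (k + 1) := by
      rw [← Int.add_mul_ediv_right _ _ two_ne_zero]; ring_nf
    rw [sub_smul, one_smul, sub_eq_add_neg, hf, ih, map_neg hf, hk]
    simp only [_root_.map_zsmul, _root_.map_neg, AddMonoidHom.zsmul_apply, AddMonoidHom.neg_apply,
      add_smul, sub_smul, one_smul, neg_smul]
    abel

theorem map_sum (hf : ∀ x y, f (x + y) = f x + f y - g x y) {m : ℕ} (x : Fin m → A) :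
    f (∑ i, x i) = ∑ i, f (x i) - ∑ i, ∑ j, if i < j then g (x i) (x j) else 0 := by
  induction m with
  | zero => simp [map_zero hf]
  | succ m ih =>
    simp only [Fin.sum_univ_castSucc, hf, ih, _root_.map_sum, AddMonoidHom.finsetSum_apply,
      Fin.castSucc_lt_castSucc_iff, Fin.castSucc_lt_last, if_true, Finset.sum_add_distrib,
      (Fin.le_last _).not_gt, if_false, Finset.sum_const_zero]
    abel

end BiadditiveDefect

namespace LeftBrace

variable {B : Type*} [LeftBrace B]

theorem mul_zero_eq_self (a : B) : a * 0 = a := by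
  rw [zero_eq_one, mul_one]

theorem bstar_zero_left (a : B) : bstar 0 a = 0 := by
  have h : (0 : B) * a = a := by rw [zero_eq_one, one_mul]
  rw [bstar, h, sub_zero, sub_self]

theorem mul_eq_add_of_bstar_eq_zero {x y : B} (h : bstar x y = 0) : x * y = x + y := by
  rwa [bstar, sub_sub, sub_eq_zero] at h

theorem bstar_add_right (a x y : B) : bstar a (x + y) = bstar a x + bstar a y := by
  simp only [bstar, brace_distrib]
  abel

def bstarAddHom (a : B) : B →+ B := AddMonoidHom.mk' (bstar a) (bstar_add_right a)

theorem bstar_neg_right (a x : B) : bstar a (-x) = -bstar a x :=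
  map_neg (bstarAddHom a) x

theorem bstar_zsmul_right (a : B) (n : ℤ) (x : B) : bstar a (n • x) = n • bstar a x :=
  map_zsmul (bstarAddHom a) n x

theorem mul_neg_eq_sub_add (a b : B) : a * -b = a - a * b + a := by
  have h := brace_distrib a b (-b)
  rw [add_neg_cancel, mul_zero_eq_self] at h
  rw [eq_sub_of_add_eq' h.symm]
  abel

theorem bstar_mul_left (x y c : B) :
    bstar (x * y) c = bstar x (bstar y c) + bstar x c + bstar y c := by
  have hyc : y * c - y - c = y * c + (-y + -c) := by abel
  simp only [bstar]
  rw [hyc, brace_distrib x (y * c), brace_distrib x (-y), mul_neg_eq_sub_add, mul_neg_eq_sub_add,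
    mul_assoc]
  abel

section

variable (hB3 : ∀ a b c : B, bstar a (bstar b c) = 0)
include hB3

theorem bstar_mul_left_of_nilpotent (x y c : B) : bstar (x * y) c = bstar x c + bstar y c := by
  rw [bstar_mul_left, hB3, zero_add]

theorem bstar_add_left_of_bstar_eq_zero {t : B} (ht : ∀ a, bstar a t = 0) (y c : B) :
    bstar (y + t) c = bstar y c + bstar t c := by
  rw [← mul_eq_add_of_bstar_eq_zero (ht y), bstar_mul_left_of_nilpotent hB3]

theorem bstar_neg_left_of_bstar_eq_zero {t : B} (ht : ∀ a, bstar a t = 0) (c : B) :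
    bstar (-t) c = -bstar t c := by
  have h := bstar_add_left_of_bstar_eq_zero hB3 ht (-t) c
  rw [neg_add_cancel, bstar_zero_left, eq_comm, add_eq_zero_iff_eq_neg] at h
  exact h

theorem bstar_add_left (x y c : B) :
    bstar (x + y) c = bstar x c + bstar y c - bstar (bstar x y) c := by
  set t := bstar x y with ht_def
  have ht : ∀ a, bstar a t = 0 := fun a => hB3 a x y
  have hnt : ∀ a, bstar a (-t) = 0 := fun a => by rw [bstar_neg_right, ht, neg_zero]
  have hxy : x * (y + -t) = x + y := by
    rw [brace_distrib, mul_eq_add_of_bstar_eq_zero (hnt x), ht_def, bstar]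
    abel
  rw [← hxy, bstar_mul_left_of_nilpotent hB3, bstar_add_left_of_bstar_eq_zero hB3 hnt,
    bstar_neg_left_of_bstar_eq_zero hB3 ht]
  abel

theorem bstar_bstar_bstar_left (p q r d : B) : bstar (bstar (bstar p q) r) d = 0 := by
  have h := bstar_add_left hB3 (bstar p q) r d
  rw [add_comm, bstar_add_left_of_bstar_eq_zero hB3 (hB3 · p q), add_comm (bstar r d)] at h
  exact sub_eq_self.mp h.symm

theorem bstar_sub_left_of_bstar_eq_zero {t : B} (ht : ∀ a, bstar a t = 0) (y c : B) :
    bstar (y - t) c = bstar y c - bstar t c := by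
  have hnt : ∀ a, bstar a (-t) = 0 := fun a => by rw [bstar_neg_right, ht, neg_zero]
  rw [sub_eq_add_neg, bstar_add_left_of_bstar_eq_zero hB3 hnt,
    bstar_neg_left_of_bstar_eq_zero hB3 ht, sub_eq_add_neg]

def bstarPolar (c : B) : B →+ B →+ B :=
  AddMonoidHom.mk'
    (fun x => AddMonoidHom.mk' (fun y => bstar (bstar x y) c) fun y y' => by
      simp only [bstar_add_right, bstar_add_left_of_bstar_eq_zero hB3 (hB3 · x y')])
    fun x x' => by
      ext y
      simp only [AddMonoidHom.mk'_apply, AddMonoidHom.add_apply, bstar_add_left hB3,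
        bstar_sub_left_of_bstar_eq_zero hB3 (hB3 · _ y),
        bstar_bstar_bstar_left hB3, sub_zero]

@[simp]
theorem bstarPolar_apply (c x y : B) : bstarPolar hB3 c x y = bstar (bstar x y) c := rfl

end

end LeftBrace

open LeftBrace in
theorem stmt15 {B : Type*} [LeftBrace B]
    (hB3 : ∀ a b c : B, bstar a (bstar b c) = 0)
    {m : ℕ} (b : Fin m → B) (bk : B) (n : Fin m → ℤ) (z : ℤ) :
    bstar (∑ i, n i • b i) (z • bk)
      = (∑ i, ((n i * z) • bstar (b i) bk
          - ((n i * (n i - 1) * z) / 2) • bstar (bstar (b i) (b i)) bk))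
        - ∑ i, ∑ j, (if i < j then (n i * n j * z) • bstar (bstar (b i) (b j)) bk else 0) := by
  have hf : ∀ x y, bstar (x + y) bk = bstar x bk + bstar y bk - bstarPolar hB3 bk x y :=
    (bstar_add_left hB3 · · bk)
  have hcoeff (w : ℤ) : w * (w - 1) * z / 2 = z * (w * (w - 1) / 2) := by
    rw [Int.mul_ediv_assoc' _ (even_iff_two_dvd.mp (Int.even_mul_pred_self w)), mul_comm]
  rw [bstar_zsmul_right, BiadditiveDefect.map_sum (f := (bstar · bk)) hf]
  simp only [BiadditiveDefect.map_zsmul (f := (bstar · bk)) hf, map_zsmul,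
    AddMonoidHom.zsmul_apply, bstarPolar_apply, smul_sub, Finset.smul_sum, smul_ite, smul_zero,
    smul_smul, hcoeff]
  ac_rfl
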